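/- arXiv:1603.07006 — 5 statements merged into one kernel-verified Lean document; each statement's English description precedes it below -/
import Mathlib

section
/- Let n be a natural number, let f be a real polynomial of degree at most n, and let x, y be real numbers with x ≠ -k for every k ∈ {0, 1, …, n}. Then f(x+y) = x · C(x+n, n) · ∑_{k=0}^{n} (-1)^k · C(n, k) · f(y-k) / (x+k), where C(x+n, n) denotes the generalized binomial coefficient (∏_{i=1}^{n} (x+i)) / n!. -/
/-!
As a polynomial in `x`, `f (x + y)` has degree at most `n`, so it is recovered from its values
`f (y - k)` at the `n + 1` nodes `x = -k` by Lagrange interpolation. Melzak's identity is the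
first barycentric form of that interpolant: the nodal polynomial is `x (x + 1) ⋯ (x + n)` and
the barycentric weight of the node `-k` is `1 / ∏_{j ≠ k} (j - k) = (-1)^k C(n, k) / n!`.
-/

open Polynomial Finset Lagrange
open scoped Nat

theorem Lagrange.eval_eq_eval_nodal_mul_sum_nodalWeight {F ι : Type*} [Field F] [DecidableEq ι]
    {s : Finset ι} {v : ι → F} {f : F[X]} {x : F} (hvs : Set.InjOn v s)
    (hf : f.degree < #s) (hx : ∀ i ∈ s, x ≠ v i) :
    f.eval x = (nodal s v).eval x * ∑ i ∈ s, nodalWeight s v i * (x - v i)⁻¹ * f.eval (v i) :=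
  (congrArg (eval x) (eq_interpolate hvs hf)).trans (eval_interpolate_not_at_node _ hx)

theorem prod_range_erase_natCast_sub (R : Type*) [CommRing R] {n k : ℕ} (hk : k ≤ n) :
    ∏ j ∈ (range (n + 1)).erase k, ((j : R) - k) = (-1) ^ k * k ! * (n - k)! := by
  have hsplit : (range (n + 1)).erase k = range k ∪ Ico (k + 1) (n + 1) := by
    ext j; simp only [mem_erase, mem_range, mem_union, mem_Ico]; omega
  have hdisj : Disjoint (range k) (Ico (k + 1) (n + 1)) :=
    disjoint_left.mpr fun j hj hj' => by simp only [mem_range, mem_Ico] at hj hj'; omega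
  have hbelow : ∏ j ∈ range k, ((j : R) - k) = (-1) ^ k * k ! := by
    have hterm : ∀ j ∈ range k, ((k - 1 - j : ℕ) : R) - k = -1 * ((j + 1 : ℕ) : R) := by
      intro j hj
      rw [mem_range] at hj
      rw [Nat.cast_sub (by omega), Nat.cast_sub (by omega)]
      push_cast; ring
    rw [← prod_range_reflect, prod_congr rfl hterm, prod_mul_distrib, prod_const, card_range,
      ← Nat.cast_prod, prod_range_add_one_eq_factorial]
  have habove : ∏ j ∈ Ico (k + 1) (n + 1), ((j : R) - k) = (n - k)! := by
    rw [prod_Ico_eq_prod_range, ← prod_range_add_one_eq_factorial, Nat.cast_prod,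
      show n + 1 - (k + 1) = n - k by omega]
    refine prod_congr rfl fun j _ => ?_
    push_cast; ring
  rw [hsplit, prod_union hdisj, hbelow, habove]

theorem nodalWeight_range_neg_natCast (F : Type*) [Field F] [CharZero F] {n k : ℕ} (hk : k ≤ n) :
    nodalWeight (range (n + 1)) (fun j : ℕ => -(j : F)) k = (-1) ^ k * n.choose k / n ! := by
  have hsign : ((-1 : F) ^ k)⁻¹ = (-1) ^ k := by
    rw [← inv_pow, inv_neg, inv_one]
  rw [nodalWeight, prod_inv_distrib, Nat.cast_choose F hk]
  simp only [neg_sub_neg]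
  rw [prod_range_erase_natCast_sub F hk, mul_assoc, mul_inv, hsign, mul_div_assoc,
    div_div_cancel_left' (Nat.cast_ne_zero.mpr n.factorial_ne_zero)]

theorem eval_nodal_range_neg_natCast {R : Type*} [CommRing R] (n : ℕ) (x : R) :
    (nodal (range (n + 1)) (fun j : ℕ => -(j : R))).eval x = x * ∏ i ∈ Icc 1 n, (x + i) := by
  rw [eval_nodal, range_eq_Ico, prod_eq_prod_Ico_succ_bot (Nat.zero_lt_succ n), zero_add,
    Nat.succ_eq_add_one, Ico_add_one_right_eq_Icc]
  simp only [Nat.cast_zero, neg_zero, sub_zero, sub_neg_eq_add]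

/-- Melzak's identity: for a real polynomial `f` of degree at most `n` and reals `x, y`
with `x ≠ -k` for all `k ∈ {0, …, n}`,
`f(x+y) = x · C(x+n, n) · ∑_{k=0}^{n} (-1)^k C(n,k) f(y-k)/(x+k)`,
where `C(x+n, n) = (∏_{i=1}^{n} (x+i)) / n!`. -/
theorem melzak_identity (n : ℕ) (f : Polynomial ℝ) (hf : f.natDegree ≤ n)
    (x y : ℝ) (hx : ∀ k : ℕ, k ≤ n → x ≠ -(k : ℝ)) :
    f.eval (x + y) =
      x * ((∏ i ∈ Finset.Icc 1 n, (x + (i : ℝ))) / (n.factorial : ℝ)) *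
        ∑ k ∈ Finset.range (n + 1),
          (-1 : ℝ) ^ k * (n.choose k : ℝ) * f.eval (y - (k : ℝ)) / (x + (k : ℝ)) := by
  have hinj : Set.InjOn (fun k : ℕ => -(k : ℝ)) (range (n + 1)) :=
    (neg_injective.comp Nat.cast_injective).injOn
  have hdeg : (f.comp (X + C y)).degree < #(range (n + 1)) := by
    rw [card_range]
    refine degree_le_natDegree.trans_lt ?_
    rw [natDegree_comp, natDegree_X_add_C, mul_one]
    exact_mod_cast Nat.lt_succ_of_le hf
  have hnode : ∀ k ∈ range (n + 1), x ≠ -(k : ℝ) := fun k hk => hx k (mem_range_succ_iff.mp hk)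
  have hshift : ∀ z : ℝ, (f.comp (X + C y)).eval z = f.eval (z + y) := by simp
  rw [← hshift, eval_eq_eval_nodal_mul_sum_nodalWeight hinj hdeg hnode,
    eval_nodal_range_neg_natCast, mul_div_assoc', div_mul_eq_mul_div, mul_sum, mul_sum, sum_div]
  refine sum_congr rfl fun k hk => ?_
  rw [nodalWeight_range_neg_natCast ℝ (mem_range_succ_iff.mp hk), hshift, sub_neg_eq_add,
    neg_add_eq_sub]
  ring
end

section
/- Let n and j be natural numbers, let f be a real polynomial of degree at most n, let y be a real number, and let x_0, x_1, …, x_j be pairwise distinct real numbers with x_i ≠ -k for all k ∈ {0, …, n} and i ∈ {0, …, j}. Then ∑_{k=0}^{n} (-1)^k · C(n, k) · f(y-k) / ∏_{i=0}^{j} (x_i + k) = ∑_{i=0}^{j} f(y + x_i) / ( x_i · C(x_i+n, n) · ∏_{ν=0, ν≠i}^{j} (x_ν - x_i) ), where C(x_i+n, n) = (∏_{m=1}^{n} (x_i+m)) / n!. -/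
/-!
Both sides come from the barycentric form of Lagrange interpolation,
`g(t) / ∏ᵢ (t - vᵢ) = ∑ᵢ g(vᵢ) / ((t - vᵢ) ∏_{l ≠ i} (vᵢ - v_l))` for `deg g < #nodes`.
For `g = 1` at the nodes `-xᵢ` it is the partial fraction decomposition of `1 / ∏ᵢ (xᵢ + k)`,
which reduces the identity to a single factor `1 / (z + k)`. That case is Melzak's identity:
the same formula for `t ↦ f(y + t)` at the nodes `0, -1, …, -n`, whose weights
`(-1)^k / (k! (n - k)!)` produce the binomial coefficients.
-/

open Finset Polynomial
open scoped Nat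

theorem Polynomial.eval_div_prod_sub_eq_sum {F ι : Type*} [Field F] [DecidableEq ι]
    {s : Finset ι} {v : ι → F} (hvs : Set.InjOn v s) {g : F[X]} (hg : g.degree < #s) {t : F}
    (ht : ∀ i ∈ s, t ≠ v i) :
    g.eval t / ∏ i ∈ s, (t - v i) =
      ∑ i ∈ s, g.eval (v i) / ((t - v i) * ∏ l ∈ s.erase i, (v i - v l)) := by
  have hnodal : ∏ i ∈ s, (t - v i) ≠ 0 :=
    prod_ne_zero_iff.mpr fun i hi => sub_ne_zero.mpr (ht i hi)
  conv_lhs => rw [Lagrange.eq_interpolate hvs hg, Lagrange.eval_interpolate_not_at_node _ ht,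
    Lagrange.eval_nodal, mul_div_cancel_left₀ _ hnodal]
  refine sum_congr rfl fun i _ => ?_
  rw [Lagrange.nodalWeight, prod_inv_distrib]
  field_simp

theorem one_div_prod_add_eq_sum {F ι : Type*} [Field F] [DecidableEq ι]
    {s : Finset ι} {x : ι → F} (hs : s.Nonempty) (hxs : Set.InjOn x s) {t : F}
    (ht : ∀ i ∈ s, x i ≠ -t) :
    1 / ∏ i ∈ s, (x i + t) = ∑ i ∈ s, 1 / ((x i + t) * ∏ l ∈ s.erase i, (x l - x i)) := by
  have hneg : Set.InjOn (fun i => -x i) s := fun a ha b hb h => hxs ha hb (neg_inj.mp h)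
  have hdeg : (1 : F[X]).degree < #s := by simpa using hs
  have hbary := eval_div_prod_sub_eq_sum hneg hdeg (t := t)
    fun i hi h => ht i hi (by rw [h, neg_neg])
  simpa [add_comm t, sub_neg_eq_add, neg_add_eq_sub] using hbary

theorem prod_erase_range_natCast_sub {R : Type*} [CommRing R] {n k : ℕ} (hk : k ≤ n) :
    ∏ m ∈ (range (n + 1)).erase k, ((m : R) - k) = (-1) ^ k * k ! * (n - k)! := by
  have hsplit : (range (n + 1)).erase k = range k ∪ Ico (k + 1) (n + 1) := by
    ext m; simp only [mem_erase, mem_range, mem_union, mem_Ico]; omega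
  have hdisj : Disjoint (range k) (Ico (k + 1) (n + 1)) :=
    disjoint_left.mpr fun m hm hm' => by simp only [mem_range, mem_Ico] at hm hm'; omega
  have below : ∏ m ∈ range k, ((m : R) - k) = (-1) ^ k * k ! := by
    rw [← prod_range_reflect, ← prod_range_add_one_eq_factorial, Nat.cast_prod, ← card_range k,
      ← prod_const, card_range, ← prod_mul_distrib]
    refine prod_congr rfl fun i hi => ?_
    have hreflect : ((k - 1 - i : ℕ) : R) + (i + 1) = k := by
      rw [← Nat.cast_add_one, ← Nat.cast_add]
      have hik := mem_range.mp hi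
      congr 1
      omega
    push_cast
    linear_combination hreflect
  have above : ∏ m ∈ Ico (k + 1) (n + 1), ((m : R) - k) = (n - k)! := by
    rw [prod_Ico_eq_prod_range, show n + 1 - (k + 1) = n - k by omega,
      ← prod_range_add_one_eq_factorial, Nat.cast_prod]
    refine prod_congr rfl fun i _ => ?_
    push_cast; ring
  rw [hsplit, prod_union hdisj, below, above]

theorem sum_range_choose_mul_eval_div (n : ℕ) {f : ℝ[X]} (hf : f.natDegree ≤ n) (y : ℝ) {z : ℝ}
    (hz : ∀ k ≤ n, z ≠ -(k : ℝ)) :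
    ∑ k ∈ range (n + 1), (-1 : ℝ) ^ k * (n.choose k : ℝ) * f.eval (y - k) / (z + k) =
      f.eval (y + z) / (z * ((∏ m ∈ Icc 1 n, (z + (m : ℝ))) / (n ! : ℝ))) := by
  have hnodes : Set.InjOn (fun k : ℕ => -(k : ℝ)) (range (n + 1)) :=
    fun a _ b _ h => by simpa using h
  have hdeg : (f.comp (X + C y)).degree < #(range (n + 1)) := by
    rw [card_range]
    refine (degree_le_natDegree).trans_lt ?_
    rw [natDegree_comp, natDegree_X_add_C, mul_one]
    exact_mod_cast Nat.lt_succ_of_le hf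
  have bary := eval_div_prod_sub_eq_sum hnodes hdeg
    fun k hk => hz k (mem_range_succ_iff.mp hk)
  simp only [eval_comp, eval_add, eval_X, eval_C, sub_neg_eq_add, neg_add_eq_sub] at bary
  have hprod : z * ∏ m ∈ Icc 1 n, (z + (m : ℝ)) = ∏ m ∈ range (n + 1), (z + (m : ℝ)) := by
    rw [Nat.range_succ_eq_Icc_zero, ← insert_Icc_add_one_left_eq_Icc n.zero_le,
      prod_insert (by simp)]
    simp
  calc ∑ k ∈ range (n + 1), (-1 : ℝ) ^ k * (n.choose k : ℝ) * f.eval (y - k) / (z + k)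
      = n ! * ∑ k ∈ range (n + 1), f.eval (y - k) /
          ((z + k) * ∏ l ∈ (range (n + 1)).erase k, ((l : ℝ) - k)) := by
        rw [mul_sum]
        refine sum_congr rfl fun k hk => ?_
        have hk := mem_range_succ_iff.mp hk
        rw [prod_erase_range_natCast_sub hk, Nat.cast_choose ℝ hk]
        field_simp
        rw [← pow_mul, pow_mul', neg_one_sq, one_pow, one_mul]
    _ = f.eval (y + z) / (z * ((∏ m ∈ Icc 1 n, (z + (m : ℝ))) / (n ! : ℝ))) := by
        rw [← bary, ← hprod, add_comm y z]
        field_simp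

/-- Generalized Melzak identity (Quaintance–Gould Eq. (7.52)) for polynomials of
degree at most `n`: for pairwise distinct reals `x_0, …, x_j` with `x_i ≠ -k`,
`∑_{k=0}^{n} (-1)^k C(n,k) f(y-k) / ∏_{i=0}^{j} (x_i+k)
  = ∑_{i=0}^{j} f(y+x_i) / (x_i · C(x_i+n, n) · ∏_{ν≠i} (x_ν - x_i))`. -/
theorem melzak_generalization (n j : ℕ) (f : Polynomial ℝ) (hf : f.natDegree ≤ n)
    (y : ℝ) (x : ℕ → ℝ)
    (hdist : ∀ i₁ i₂ : ℕ, i₁ ≤ j → i₂ ≤ j → i₁ ≠ i₂ → x i₁ ≠ x i₂)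
    (hx : ∀ i k : ℕ, i ≤ j → k ≤ n → x i ≠ -(k : ℝ)) :
    ∑ k ∈ Finset.range (n + 1),
        (-1 : ℝ) ^ k * (n.choose k : ℝ) * f.eval (y - (k : ℝ)) /
          ∏ i ∈ Finset.range (j + 1), (x i + (k : ℝ)) =
      ∑ i ∈ Finset.range (j + 1),
        f.eval (y + x i) /
          (x i * ((∏ m ∈ Finset.Icc 1 n, (x i + (m : ℝ))) / (n.factorial : ℝ)) *
            ∏ ν ∈ (Finset.range (j + 1)).erase i, (x ν - x i)) := by
  have hinj : Set.InjOn x (range (j + 1)) := fun a ha b hb =>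
    not_imp_not.mp (hdist a b (mem_range_succ_iff.mp ha) (mem_range_succ_iff.mp hb))
  calc _ = ∑ k ∈ range (n + 1), ∑ i ∈ range (j + 1),
          (-1 : ℝ) ^ k * (n.choose k : ℝ) * f.eval (y - k) / (x i + k) /
            ∏ ν ∈ (range (j + 1)).erase i, (x ν - x i) := by
        refine sum_congr rfl fun k hk => ?_
        rw [div_eq_mul_one_div, one_div_prod_add_eq_sum nonempty_range_add_one hinj
          fun i hi => hx i k (mem_range_succ_iff.mp hi) (mem_range_succ_iff.mp hk), mul_sum]
        simp only [mul_one_div, div_div]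
    _ = _ := by
        rw [sum_comm]
        refine sum_congr rfl fun i hi => ?_
        rw [← sum_div, sum_range_choose_mul_eval_div n hf y
          fun k hk => hx i k (mem_range_succ_iff.mp hi) hk, div_div]
end

section
/- Let n and j be natural numbers, let f be a real polynomial of degree at most n + j, let y be a real number, and let x_0, x_1, …, x_j be pairwise distinct real numbers with x_i ≠ -k for all k ∈ {0, …, n} and i ∈ {0, …, j}. Then ∑_{k=0}^{n} (-1)^k · C(n, k) · f(y-k) / ∏_{i=0}^{j} (x_i + k) = ∑_{i=0}^{j} f(y + x_i) / ( x_i · C(x_i+n, n) · ∏_{ν=0, ν≠i}^{j} (x_ν - x_i) ), where C(x_i+n, n) = (∏_{m=1}^{n} (x_i+m)) / n!. -/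
/-!
The divided difference of order `n + j + 1` of the polynomial `t ↦ f (y - t)`, of degree at most
`n + j`, vanishes on the `n + j + 2` distinct nodes `0, 1, …, n, -x₀, …, -x_j`. The nodal weight
of the node `k` within `0, …, n` is `(-1) ^ (n + k) * C(n, k) / n!`, so after multiplying by
`(-1) ^ n * n!` the terms at `0, …, n` form the left-hand side and those at `-xᵢ` form minus the
right-hand side.
-/

open Polynomial Finset
open scoped Nat

namespace Lagrange

variable {F ι κ : Type*} [Field F] [DecidableEq ι] [DecidableEq κ]

theorem sum_eval_div_prod_sub_eq_zero {s : Finset ι} {v : ι → F} (hvs : Set.InjOn v s)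
    {P : F[X]} (hP : P.natDegree + 1 < #s) :
    ∑ i ∈ s, P.eval (v i) / ∏ j ∈ s.erase i, (v i - v j) = 0 := by
  have hdeg : P.degree < #s := degree_le_natDegree.trans_lt (by exact_mod_cast (by omega))
  rw [← coeff_eq_sum hvs hdeg]
  exact coeff_eq_zero_of_natDegree_lt (by omega)

theorem sum_eval_div_add_sum_eval_div_eq_zero {s : Finset ι} {t : Finset κ} {u : ι → F}
    {w : κ → F} (hu : Set.InjOn u s) (hw : Set.InjOn w t) (huw : ∀ i ∈ s, ∀ k ∈ t, u i ≠ w k)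
    {P : F[X]} (hP : P.natDegree + 1 < #s + #t) :
    ∑ i ∈ s, P.eval (u i) / ((∏ i' ∈ s.erase i, (u i - u i')) * ∏ k ∈ t, (u i - w k)) +
      ∑ k ∈ t, P.eval (w k) / ((∏ i ∈ s, (w k - u i)) * ∏ k' ∈ t.erase k, (w k - w k')) =
      0 := by
  have hinj : Set.InjOn (Sum.elim u w) (s.disjSum t) := by
    rintro (i | k) hi (i' | k') hi' h <;>
      simp only [mem_coe, inl_mem_disjSum, inr_mem_disjSum, Sum.elim_inl, Sum.elim_inr] at hi hi' h
    · simpa using hu hi hi' h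
    · exact absurd h (huw i hi k' hi')
    · exact absurd h.symm (huw i' hi' k hi)
    · simpa using hw hi hi' h
  have := sum_eval_div_prod_sub_eq_zero hinj (by rwa [card_disjSum])
  rw [sum_disjSum] at this
  convert this using 3 with i hi k hk
  · have : (s.disjSum t).erase (.inl i) = (s.erase i).disjSum t := by ext (_ | _) <;> simp
    rw [this, prod_disjSum]; rfl
  · have : (s.disjSum t).erase (.inr k) = s.disjSum (t.erase k) := by ext (_ | _) <;> simp
    rw [this, prod_disjSum]; rfl

end Lagrange

theorem Finset.prod_erase_range_sub_mul_choose {R : Type*} [CommRing R] {n k : ℕ}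
    (hk : k ≤ n) :
    (∏ m ∈ (range (n + 1)).erase k, ((k : R) - m)) * ((-1) ^ k * n.choose k) =
      (-1) ^ n * n ! := by
  induction n, hk using Nat.le_induction with
  | base =>
    have hfact : ∏ m ∈ range k, ((k : R) - m) = k ! := by
      rw [← Nat.descFactorial_self, Nat.descFactorial_eq_prod_range, Nat.cast_prod]
      exact prod_congr rfl fun m hm => (Nat.cast_sub (mem_range.mp hm).le).symm
    rw [range_add_one, erase_insert notMem_range_self, hfact, Nat.choose_self, Nat.cast_one]
    ring
  | succ n hkn ih =>
    have hchoose : (n.choose k : R) * (n + 1) = (n + 1).choose k * (n + 1 - k) := by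
      have := congrArg (Nat.cast : ℕ → R) (Nat.choose_mul_succ_eq n k)
      push_cast [Nat.cast_sub (by omega : k ≤ n + 1)] at this
      exact this
    rw [range_add_one, erase_insert_of_ne (by omega), prod_insert (by simp), Nat.factorial_succ]
    push_cast
    linear_combination (-(n + 1 : R)) * ih +
      (∏ m ∈ (range (n + 1)).erase k, ((k : R) - m)) * (-1) ^ k * hchoose

theorem neg_one_pow_mul_choose_eq_div_prod_erase_range {K : Type*} [Field K] [CharZero K]
    {n k : ℕ} (hk : k ≤ n) :
    (-1) ^ k * (n.choose k : K) =
      (-1) ^ n * n ! / ∏ m ∈ (range (n + 1)).erase k, ((k : K) - m) := by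
  have h := prod_erase_range_sub_mul_choose (R := K) hk
  rw [eq_div_iff (left_ne_zero_of_mul (by rw [h]; simp [Nat.factorial_ne_zero])), mul_comm, h]

theorem Finset.prod_range_neg_sub_natCast {R : Type*} [CommRing R] (n : ℕ) (t : R) :
    ∏ m ∈ range (n + 1), (-t - m) = (-1) ^ (n + 1) * (t * ∏ m ∈ Icc 1 n, (t + m)) := by
  simp_rw [← neg_add']
  rw [prod_neg, card_range, range_eq_Ico, Ico_add_one_right_eq_Icc,
    ← insert_Icc_add_one_left_eq_Icc (Nat.zero_le n), prod_insert (by simp), Nat.cast_zero,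
    add_zero, zero_add]

/-- Generalized Melzak identity (Quaintance–Gould Eq. (7.52)) for polynomials of
degree at most `n + j`: for pairwise distinct reals `x_0, …, x_j` with `x_i ≠ -k`,
`∑_{k=0}^{n} (-1)^k C(n,k) f(y-k) / ∏_{i=0}^{j} (x_i+k)
  = ∑_{i=0}^{j} f(y+x_i) / (x_i · C(x_i+n, n) · ∏_{ν≠i} (x_ν - x_i))`. -/
theorem melzak_generalization_strong (n j : ℕ) (f : Polynomial ℝ) (hf : f.natDegree ≤ n + j)
    (y : ℝ) (x : ℕ → ℝ)
    (hdist : ∀ i₁ i₂ : ℕ, i₁ ≤ j → i₂ ≤ j → i₁ ≠ i₂ → x i₁ ≠ x i₂)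
    (hx : ∀ i k : ℕ, i ≤ j → k ≤ n → x i ≠ -(k : ℝ)) :
    ∑ k ∈ Finset.range (n + 1),
        (-1 : ℝ) ^ k * (n.choose k : ℝ) * f.eval (y - (k : ℝ)) /
          ∏ i ∈ Finset.range (j + 1), (x i + (k : ℝ)) =
      ∑ i ∈ Finset.range (j + 1),
        f.eval (y + x i) /
          (x i * ((∏ m ∈ Finset.Icc 1 n, (x i + (m : ℝ))) / (n.factorial : ℝ)) *
            ∏ ν ∈ (Finset.range (j + 1)).erase i, (x ν - x i)) := by
  have hnodes : Set.InjOn (fun i => -x i) (range (j + 1)) := fun a ha b hb hab =>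
    by_contra fun hne => hdist a b (mem_range_succ_iff.mp ha) (mem_range_succ_iff.mp hb) hne
      (neg_injective hab)
  have hdisjoint : ∀ k ∈ range (n + 1), ∀ i ∈ range (j + 1), (k : ℝ) ≠ -x i := fun k hk i hi h =>
    hx i k (mem_range_succ_iff.mp hi) (mem_range_succ_iff.mp hk) (by rw [h, neg_neg])
  have hdeg : (f.comp (C y - X)).natDegree + 1 < #(range (n + 1)) + #(range (j + 1)) := by
    rw [natDegree_comp, ← neg_sub, natDegree_neg, natDegree_X_sub_C, card_range, card_range]
    omega
  have key := Lagrange.sum_eval_div_add_sum_eval_div_eq_zero (u := fun m : ℕ => (m : ℝ))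
    Nat.cast_injective.injOn hnodes hdisjoint hdeg
  simp only [eval_comp, eval_sub, eval_C, eval_X, sub_neg_eq_add, neg_add_eq_sub] at key
  calc _ = (-1) ^ n * (n ! : ℝ) * ∑ k ∈ range (n + 1), f.eval (y - k) /
        ((∏ m ∈ (range (n + 1)).erase k, ((k : ℝ) - m)) * ∏ i ∈ range (j + 1), (k + x i)) := by
        rw [mul_sum]
        refine sum_congr rfl fun k hk => ?_
        rw [neg_one_pow_mul_choose_eq_div_prod_erase_range (mem_range_succ_iff.mp hk)]
        simp_rw [add_comm (k : ℝ)]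
        ring
    _ = -((-1) ^ n * (n ! : ℝ)) * ∑ i ∈ range (j + 1), f.eval (y + x i) /
        ((∏ m ∈ range (n + 1), (-x i - m)) * ∏ ν ∈ (range (j + 1)).erase i, (x ν - x i)) := by
        linear_combination (-1) ^ n * (n ! : ℝ) * key
    _ = _ := by
        rw [mul_sum]
        refine sum_congr rfl fun i _ => ?_
        rw [prod_range_neg_sub_natCast, pow_succ]
        field_simp
end

section
/- Let n be a natural number and let x be a real number with x ≠ -k for every k ∈ {0, 1, …, n}. Then ∑_{k=0}^{n} (-1)^k · C(n, k) / (x+k) = n! / ∏_{k=0}^{n} (x+k). -/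
/-!
The left-hand side is `(-1)^n` times the `n`-th forward difference of `y ↦ y⁻¹` at `x`. That
difference is `(-1)^n n! / ∏_{j ≤ n} (x + j)`: by induction, since
`x · ∏_{j ≤ n} (x + 1 + j) = ∏_{j ≤ n + 1} (x + j) = (x + n + 1) · ∏_{j ≤ n} (x + j)`,
differencing the formula at level `n` produces the formula at level `n + 1`.
-/

open Finset Nat

theorem sum_neg_one_pow_mul_choose_smul_eq_fwdDiff_iter {M G : Type*} [AddCommMonoid M]
    [AddCommGroup G] (h : M) (f : M → G) (n : ℕ) (y : M) :
    ∑ k ∈ range (n + 1), ((-1 : ℤ) ^ k * n.choose k) • f (y + k • h) =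
      (-1 : ℤ) ^ n • (fwdDiff h)^[n] f y := by
  rw [fwdDiff_iter_eq_sum_shift, smul_sum]
  refine sum_congr rfl fun k hk ↦ ?_
  obtain ⟨m, rfl⟩ := Nat.exists_eq_add_of_le (mem_range_succ_iff.1 hk)
  rw [smul_smul, Nat.add_sub_cancel_left, ← mul_assoc, pow_add, mul_assoc ((-1) ^ k),
    ← sq, ← pow_mul', (even_two_mul m).neg_one_pow, mul_one]

section Field

variable {K : Type*} [Field K]

theorem prod_range_add_cast_mul_eq_mul_prod_range_add_one_add (x : K) (n : ℕ) :
    (∏ j ∈ range (n + 1), (x + j)) * (x + (n + 1 : ℕ)) =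
      x * ∏ j ∈ range (n + 1), (x + 1 + j) := by
  rw [← prod_range_succ (fun j : ℕ ↦ x + j), prod_range_succ']
  push_cast
  simp only [add_assoc, add_comm (1 : K), add_zero, mul_comm]

theorem fwdDiff_iter_inv (n : ℕ) (x : K) (hx : ∀ j ≤ n, x + j ≠ 0) :
    (fwdDiff 1)^[n] (fun y : K ↦ y⁻¹) x = (-1) ^ n * n ! / ∏ j ∈ range (n + 1), (x + j) := by
  induction n generalizing x with
  | zero => simp
  | succ n ih =>
    have hx_succ : ∀ j ≤ n, x + 1 + j ≠ 0 := fun j hj ↦ by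
      simpa [add_assoc, add_comm (1 : K)] using hx (j + 1) (by omega)
    have hprod := prod_range_add_cast_mul_eq_mul_prod_range_add_one_add x n
    have h0 : x ≠ 0 := by simpa using hx 0 (by omega)
    have hlast : x + (n + 1) ≠ 0 := by exact_mod_cast hx (n + 1) le_rfl
    have hP : ∏ j ∈ range (n + 1), (x + j) ≠ 0 :=
      prod_ne_zero_iff.2 fun j hj ↦ hx j (by simp at hj; omega)
    have hQ : ∏ j ∈ range (n + 1), (x + 1 + j) ≠ 0 :=
      prod_ne_zero_iff.2 fun j hj ↦ hx_succ j (by simp at hj; omega)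
    rw [Function.iterate_succ_apply', fwdDiff, ih (x + 1) hx_succ,
      ih x fun j hj ↦ hx j (by omega), prod_range_succ (fun j : ℕ ↦ x + j) (n + 1),
      factorial_succ]
    generalize ∏ j ∈ range (n + 1), (x + j) = P at *
    generalize ∏ j ∈ range (n + 1), (x + 1 + j) = Q at *
    push_cast at *
    field_simp
    linear_combination (-1) ^ n * (n ! : K) * hprod

end Field

/-- Classical partial fraction / Beta identity:
`∑_{k=0}^{n} (-1)^k C(n,k)/(x+k) = n! / ∏_{k=0}^{n} (x+k)`. -/
theorem sum_alternating_inv_eq (n : ℕ) (x : ℝ) (hx : ∀ k : ℕ, k ≤ n → x ≠ -(k : ℝ)) :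
    ∑ k ∈ Finset.range (n + 1), (-1 : ℝ) ^ k * (n.choose k : ℝ) / (x + (k : ℝ)) =
      (n.factorial : ℝ) / ∏ k ∈ Finset.range (n + 1), (x + (k : ℝ)) := by
  have hx' : ∀ k ≤ n, x + k ≠ 0 := fun k hk h ↦ hx k hk (eq_neg_of_add_eq_zero_left h)
  have key := sum_neg_one_pow_mul_choose_smul_eq_fwdDiff_iter 1 (fun y : ℝ ↦ y⁻¹) n x
  rw [fwdDiff_iter_inv n x hx'] at key
  simp only [zsmul_eq_mul, nsmul_one, ← div_eq_mul_inv] at key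
  push_cast at key
  rw [key, ← mul_div_assoc, ← mul_assoc, ← pow_add, ← two_mul, pow_mul, neg_one_sq, one_pow,
    one_mul]
end

section
/- Let n be a natural number, let f be a real polynomial of degree at most n, and let x, y be real numbers with x ≠ -k for every k ∈ {0, 1, …, n}. Then ∑_{k=0}^{n} (-1)^k · C(n, k) · f(y-k) / (x+k) = f(x+y) · ∑_{k=0}^{n} (-1)^k · C(n, k) / (x+k). -/
/-!
Put `P t = f (x + y - t)`, so that `P (x + k) = f (y - k)` and `P 0 = f (x + y)`. Splitting
`P t = P 0 + t * Q t` with `deg Q < n` (`Q = P.divX`), the left-hand side becomes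
`P 0 * ∑ (-1)^k C(n,k) / (x + k)` plus `∑ (-1)^k C(n,k) Q (x + k)`, and the latter is, up to
sign, the `n`-th forward difference of `Q` at `x`, which vanishes.
-/

open Finset Polynomial

namespace Polynomial

theorem alternating_sum_choose_mul_eval_add {R : Type*} [CommRing R] {P : R[X]} {n : ℕ}
    (hP : P.degree < n) (x : R) :
    ∑ k ∈ range (n + 1), (-1 : R) ^ k * n.choose k * P.eval (x + k) = 0 := by
  rcases eq_or_ne P 0 with rfl | hP0
  · simp
  have hΔ := fwdDiff_iter_eq_sum_shift 1 P.eval n x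
  rw [fwdDiff_iter_eq_zero_of_degree_lt ((natDegree_lt_iff_degree_lt hP0).2 hP)] at hΔ
  calc ∑ k ∈ range (n + 1), (-1 : R) ^ k * n.choose k * P.eval (x + k)
      = (-1) ^ n *
          ∑ k ∈ range (n + 1), ((-1 : ℤ) ^ (n - k) * n.choose k) • P.eval (x + k • 1) := by
        rw [mul_sum]
        refine sum_congr rfl fun k hk => ?_
        have hkn : k ≤ n := Nat.lt_succ_iff.1 (mem_range.1 hk)
        have hsign : (-1 : R) ^ k = (-1) ^ n * (-1) ^ (n - k) := by
          rw [← pow_add, show n + (n - k) = k + 2 * (n - k) by omega, pow_add, pow_mul]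
          simp
        rw [hsign, zsmul_eq_mul, nsmul_one]
        push_cast
        ring
    _ = 0 := by rw [← hΔ, Pi.zero_apply, mul_zero]

theorem alternating_sum_choose_mul_eval_add_div {K : Type*} [Field K] {P : K[X]} {n : ℕ}
    (hP : P.degree ≤ n) {x : K} (hx : ∀ k ≤ n, x + k ≠ 0) :
    ∑ k ∈ range (n + 1), (-1 : K) ^ k * n.choose k * P.eval (x + k) / (x + k) =
      P.eval 0 * ∑ k ∈ range (n + 1), (-1 : K) ^ k * n.choose k / (x + k) := by
  have hdivX : P.divX.degree < n := by
    rcases eq_or_ne P 0 with rfl | hP0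
    · simp
    · exact (degree_divX_lt hP0).trans_le hP
  have hsplit : ∀ t, P.eval t = t * P.divX.eval t + P.eval 0 := fun t => by
    conv_lhs => rw [← X_mul_divX_add P]
    simp [coeff_zero_eq_eval_zero]
  calc ∑ k ∈ range (n + 1), (-1 : K) ^ k * n.choose k * P.eval (x + k) / (x + k)
      = ∑ k ∈ range (n + 1), ((-1 : K) ^ k * n.choose k * P.divX.eval (x + k)
          + P.eval 0 * ((-1 : K) ^ k * n.choose k / (x + k))) := by
        refine sum_congr rfl fun k hk => ?_
        have hxk := hx k (Nat.lt_succ_iff.1 (mem_range.1 hk))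
        rw [hsplit]
        field_simp
    _ = P.eval 0 * ∑ k ∈ range (n + 1), (-1 : K) ^ k * n.choose k / (x + k) := by
        rw [sum_add_distrib, alternating_sum_choose_mul_eval_add hdivX, zero_add, mul_sum]

end Polynomial

/-- Key intermediate step in the elementary proof of Melzak's identity:
`∑_{k=0}^{n} (-1)^k C(n,k) f(y-k)/(x+k) = f(x+y) ∑_{k=0}^{n} (-1)^k C(n,k)/(x+k)`. -/
theorem melzak_intermediate (n : ℕ) (f : Polynomial ℝ) (hf : f.natDegree ≤ n)
    (x y : ℝ) (hx : ∀ k : ℕ, k ≤ n → x ≠ -(k : ℝ)) :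
    ∑ k ∈ Finset.range (n + 1),
        (-1 : ℝ) ^ k * (n.choose k : ℝ) * f.eval (y - (k : ℝ)) / (x + (k : ℝ)) =
      f.eval (x + y) *
        ∑ k ∈ Finset.range (n + 1), (-1 : ℝ) ^ k * (n.choose k : ℝ) / (x + (k : ℝ)) := by
  have hdeg : (f.comp (C (x + y) - X)).degree ≤ n := by
    have hlin : (C (x + y) - X).natDegree ≤ 1 := by compute_degree
    exact degree_le_natDegree.trans <|
      mod_cast natDegree_comp_le.trans ((Nat.mul_le_mul hf hlin).trans_eq (mul_one n))
  have hxk : ∀ k ≤ n, x + k ≠ 0 := fun k hk h => hx k hk (eq_neg_of_add_eq_zero_left h)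
  simpa only [eval_comp, eval_sub, eval_C, eval_X, sub_zero, add_sub_add_left_eq_sub] using
    alternating_sum_choose_mul_eval_add_div hdeg hxk
end
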